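/- arXiv:2001.10676 — 2 statements merged into one kernel-verified Lean document; each statement's English description precedes it below -/
import Mathlib

section
/- Every quaternion matrix Q ∈ ℍ^{N₁×N₂} admits a quaternion singular value decomposition: there exist a unitary quaternion matrix U ∈ ℍ^{N₁×N₁} (i.e., U Uᴴ = Uᴴ U = I), a unitary quaternion matrix V ∈ ℍ^{N₂×N₂}, and a rectangular diagonal matrix Λ ∈ ℝ^{N₁×N₂} whose diagonal entries are nonnegative real numbers, such that Q = U Λ Vᴴ. -/
open Matrix

noncomputable section

/-- The two complex components of the Cayley–Dickson form of a quaternion. -/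
def qC1 (q : Quaternion ℝ) : ℂ := ⟨q.re, q.imI⟩
def qC2 (q : Quaternion ℝ) : ℂ := ⟨q.imJ, q.imK⟩

/-- The isomorphic complex representation `f` of a quaternion matrix:
`f(Q) = [[Z₁, Z₂], [−Z₂*, Z₁*]]` with `Z₁ = Q₀ + Q₁ i`, `Z₂ = Q₂ + Q₃ i`. -/
def qf {N₁ N₂ : ℕ} (Q : Matrix (Fin N₁) (Fin N₂) (Quaternion ℝ)) :
    Matrix (Fin N₁ ⊕ Fin N₁) (Fin N₂ ⊕ Fin N₂) ℂ :=
  Matrix.fromBlocks (Matrix.of fun m n => qC1 (Q m n)) (Matrix.of fun m n => qC2 (Q m n))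
    (Matrix.of fun m n => -star (qC2 (Q m n))) (Matrix.of fun m n => star (qC1 (Q m n)))

/-- A square quaternion matrix is unitary if `U Uᴴ = Uᴴ U = I`. -/
def qUnitary {N : ℕ} (U : Matrix (Fin N) (Fin N) (Quaternion ℝ)) : Prop :=
  U * Uᴴ = 1 ∧ Uᴴ * U = 1

/-- A rectangular real matrix is "rectangular diagonal with nonnegative diagonal entries". -/
def recDiagNonneg {N₁ N₂ : ℕ} (Λ : Matrix (Fin N₁) (Fin N₂) ℝ) : Prop :=
  (∀ (m : Fin N₁) (n : Fin N₂), (m : ℕ) ≠ (n : ℕ) → Λ m n = 0) ∧ ∀ m n, 0 ≤ Λ m n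

/-- View a real matrix as a quaternion matrix. -/
def rToQ {N₁ N₂ : ℕ} (Λ : Matrix (Fin N₁) (Fin N₂) ℝ) :
    Matrix (Fin N₁) (Fin N₂) (Quaternion ℝ) :=
  Λ.map (algebraMap ℝ (Quaternion ℝ))

/-- `IsQSVD Q U Λ V` : `Q = U Λ Vᴴ` is a quaternion singular value decomposition. -/
def IsQSVD {N₁ N₂ : ℕ} (Q : Matrix (Fin N₁) (Fin N₂) (Quaternion ℝ))
    (U : Matrix (Fin N₁) (Fin N₁) (Quaternion ℝ))
    (Λ : Matrix (Fin N₁) (Fin N₂) ℝ)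
    (V : Matrix (Fin N₂) (Fin N₂) (Quaternion ℝ)) : Prop :=
  qUnitary U ∧ qUnitary V ∧ recDiagNonneg Λ ∧ Q = U * rToQ Λ * Vᴴ

/-- The quaternion nuclear norm: `½ Σ_j sqrt(λ_j)`, `λ_j` the eigenvalues of `f(X)ᴴ f(X)`. -/
noncomputable def qNuclearNorm {N₁ N₂ : ℕ}
    (X : Matrix (Fin N₁) (Fin N₂) (Quaternion ℝ)) : ℝ :=
  (1 / 2) * ∑ j, Real.sqrt ((Matrix.isHermitian_conjTranspose_mul_self (qf X)).eigenvalues j)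

/-- The quaternion Frobenius norm. -/
noncomputable def qFrob {M N : ℕ} (X : Matrix (Fin M) (Fin N) (Quaternion ℝ)) : ℝ :=
  Real.sqrt (∑ m, ∑ n, ‖X m n‖ ^ 2)

/-- The spectral norm of a quaternion matrix: the square root of the largest eigenvalue
of `f(E)ᴴ f(E)`. -/
noncomputable def qSpectralNorm {N₁ N₂ : ℕ}
    (E : Matrix (Fin N₁) (Fin N₂) (Quaternion ℝ)) : ℝ :=
  ⨆ j, Real.sqrt ((Matrix.isHermitian_conjTranspose_mul_self (qf E)).eigenvalues j)

/-! For `Q ≠ 0` the Hermitian matrix `Qᴴ Q` has a real eigenvalue `σ² > 0` with a unit eigenvector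
`v`: this is read off the complex adjoint representation `qf`, where `qf (Qᴴ Q)` is a Hermitian
complex matrix whose eigenvectors pull back to quaternion vectors along the first-column map
`qcol`. With `u = σ⁻¹ Q v` we have `Q v = σ u` and `Qᴴ u = σ v`. Completing `u` and `v` to unitary
matrices `U₁`, `V₁` (each a Householder reflection times a diagonal phase matrix) gives
`U₁ᴴ Q V₁ = [[σ, 0], [0, Q']]`, and induction on the size applies to `Q'`. -/

open scoped Quaternion

instance : StarModule ℝ ℍ := ⟨fun r a => by rw [Quaternion.star_smul, star_trivial r]⟩

namespace Matrix

variable {α β : Type*} {l m n : ℕ}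

lemma diagonal_mem_unitary {ι : Type*} [Fintype ι] [DecidableEq ι] [Semiring α] [StarRing α]
    {d : ι → α} (hd : ∀ i, d i ∈ unitary α) : diagonal d ∈ unitary (Matrix ι ι α) := by
  simp only [Unitary.mem_iff, star_eq_conjTranspose, diagonal_conjTranspose,
    diagonal_mul_diagonal, Pi.star_apply, (Unitary.mem_iff.1 (hd _)).1,
    (Unitary.mem_iff.1 (hd _)).2, diagonal_one, and_self]

/-- The block matrix `[[a, 0], [0, A]]`. -/
def border [Zero α] (a : α) (A : Matrix (Fin m) (Fin n) α) : Matrix (Fin (m + 1)) (Fin (n + 1)) α :=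
  of (vecCons (vecCons a 0) fun i => vecCons 0 (A i))

@[simp] lemma border_zero_zero [Zero α] (a : α) (A : Matrix (Fin m) (Fin n) α) :
    border a A 0 0 = a := rfl

@[simp] lemma border_zero_succ [Zero α] (a : α) (A : Matrix (Fin m) (Fin n) α) (j : Fin n) :
    border a A 0 j.succ = 0 := rfl

@[simp] lemma border_succ_zero [Zero α] (a : α) (A : Matrix (Fin m) (Fin n) α) (i : Fin m) :
    border a A i.succ 0 = 0 := rfl

@[simp] lemma border_succ_succ [Zero α] (a : α) (A : Matrix (Fin m) (Fin n) α) (i : Fin m)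
    (j : Fin n) : border a A i.succ j.succ = A i j := rfl

lemma border_mul_border [NonUnitalNonAssocSemiring α] (a b : α) (A : Matrix (Fin l) (Fin m) α)
    (B : Matrix (Fin m) (Fin n) α) : border a A * border b B = border (a * b) (A * B) := by
  ext i j
  refine Fin.cases ?_ (fun i => ?_) i <;> refine Fin.cases ?_ (fun j => ?_) j <;>
    simp [mul_apply, Fin.sum_univ_succ]

lemma conjTranspose_border [AddMonoid α] [StarAddMonoid α] (a : α)
    (A : Matrix (Fin m) (Fin n) α) : (border a A)ᴴ = border (star a) Aᴴ := by
  ext i j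
  refine Fin.cases ?_ (fun i => ?_) i <;> refine Fin.cases ?_ (fun j => ?_) j <;> simp

lemma border_one_one [AddMonoidWithOne α] : border (1 : α) (1 : Matrix (Fin n) (Fin n) α) = 1 := by
  ext i j
  refine Fin.cases ?_ (fun i => ?_) i <;> refine Fin.cases ?_ (fun j => ?_) j <;>
    simp [one_apply, Fin.succ_ne_zero, (Fin.succ_ne_zero _).symm]

lemma map_border [Zero α] [Zero β] (a : α) (A : Matrix (Fin m) (Fin n) α) {f : α → β}
    (hf : f 0 = 0) : (border a A).map f = border (f a) (A.map f) := by
  ext i j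
  refine Fin.cases ?_ (fun i => ?_) i <;> refine Fin.cases ?_ (fun j => ?_) j <;> simp [hf]

lemma border_one_mem_unitary [Semiring α] [StarRing α] {U : Matrix (Fin n) (Fin n) α}
    (hU : U ∈ unitary (Matrix (Fin n) (Fin n) α)) :
    border 1 U ∈ unitary (Matrix (Fin (n + 1)) (Fin (n + 1)) α) := by
  rw [Unitary.mem_iff, star_eq_conjTranspose, conjTranspose_border, border_mul_border,
    border_mul_border, star_one, mul_one, ← star_eq_conjTranspose, Unitary.star_mul_self_of_mem hU,
    Unitary.mul_star_self_of_mem hU, border_one_one]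
  exact ⟨rfl, rfl⟩

end Matrix

section CayleyDickson

lemma qC1_add (p q : ℍ) : qC1 (p + q) = qC1 p + qC1 q := by
  apply Complex.ext <;> simp [qC1]

lemma qC2_add (p q : ℍ) : qC2 (p + q) = qC2 p + qC2 q := by
  apply Complex.ext <;> simp [qC2]

lemma qC1_sum {ι : Type*} (s : Finset ι) (g : ι → ℍ) :
    qC1 (∑ k ∈ s, g k) = ∑ k ∈ s, qC1 (g k) :=
  map_sum (AddMonoidHom.mk' qC1 qC1_add) g s

lemma qC2_sum {ι : Type*} (s : Finset ι) (g : ι → ℍ) :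
    qC2 (∑ k ∈ s, g k) = ∑ k ∈ s, qC2 (g k) :=
  map_sum (AddMonoidHom.mk' qC2 qC2_add) g s

@[simp] lemma qC1_zero : qC1 0 = 0 := rfl

@[simp] lemma qC2_zero : qC2 0 = 0 := rfl

lemma qC1_mul (p q : ℍ) : qC1 (p * q) = qC1 p * qC1 q - qC2 p * star (qC2 q) := by
  apply Complex.ext <;> simp [qC1, qC2] <;> ring

lemma qC2_mul (p q : ℍ) : qC2 (p * q) = qC1 p * qC2 q + qC2 p * star (qC1 q) := by
  apply Complex.ext <;> simp [qC1, qC2] <;> ring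

lemma qC1_star (q : ℍ) : qC1 (star q) = star (qC1 q) := by
  apply Complex.ext <;> simp [qC1]

lemma qC2_star (q : ℍ) : qC2 (star q) = -qC2 q := by
  apply Complex.ext <;> simp [qC2]

lemma qC1_smul (r : ℝ) (q : ℍ) : qC1 (r • q) = r • qC1 q := by
  apply Complex.ext <;> simp [qC1]

lemma qC2_smul (r : ℝ) (q : ℍ) : qC2 (r • q) = r • qC2 q := by
  apply Complex.ext <;> simp [qC2]

lemma ext_qC {p q : ℍ} (h₁ : qC1 p = qC1 q) (h₂ : qC2 p = qC2 q) : p = q :=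
  QuaternionAlgebra.ext (congrArg Complex.re h₁) (congrArg Complex.im h₁)
    (congrArg Complex.re h₂) (congrArg Complex.im h₂)

variable {N N₁ N₂ : ℕ}

lemma qf_zero : qf (0 : Matrix (Fin N₁) (Fin N₂) ℍ) = 0 := by
  ext (i | i) (j | j) <;> simp [qf]

lemma qf_conjTranspose (A : Matrix (Fin N₁) (Fin N₂) ℍ) : qf Aᴴ = (qf A)ᴴ := by
  ext (i | i) (j | j) <;> simp [qf, qC1_star, qC2_star]

lemma qf_injective : Function.Injective (qf : Matrix (Fin N₁) (Fin N₂) ℍ → _) := by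
  intro A B h
  refine Matrix.ext fun m n => ?_
  exact ext_qC (congrFun₂ h (.inl m) (.inl n)) (congrFun₂ h (.inl m) (.inr n))

/-- The first column of `qf` of the column matrix `w`. -/
def qcol (w : Fin N → ℍ) : Fin N ⊕ Fin N → ℂ :=
  Sum.elim (fun i => qC1 (w i)) (fun i => -star (qC2 (w i)))

lemma qcol_injective : Function.Injective (qcol : (Fin N → ℍ) → _) := by
  intro v w h
  funext i
  exact ext_qC (congrFun h (.inl i)) (star_injective (neg_injective (congrFun h (.inr i))))

lemma qcol_surjective : Function.Surjective (qcol : (Fin N → ℍ) → _) := fun z =>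
  ⟨fun i => ⟨(z (.inl i)).re, (z (.inl i)).im, -(z (.inr i)).re, (z (.inr i)).im⟩, by
    ext (i | i) <;> apply Complex.ext <;> simp [qcol, qC1, qC2]⟩

lemma qcol_zero : qcol (0 : Fin N → ℍ) = 0 := by
  ext (i | i) <;> simp [qcol]

lemma qcol_smul (t : ℝ) (w : Fin N → ℍ) : qcol (t • w) = t • qcol w := by
  ext (i | i) <;> simp [qcol, qC1_smul, qC2_smul]

lemma qf_mulVec_qcol (A : Matrix (Fin N₁) (Fin N₂) ℍ) (w : Fin N₂ → ℍ) :
    qf A *ᵥ qcol w = qcol (A *ᵥ w) := by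
  ext (i | i) <;>
    simp [qf, qcol, mulVec, dotProduct, qC1_sum, qC2_sum, qC1_mul, qC2_mul,
      Finset.sum_sub_distrib, Finset.sum_add_distrib]; ring

end CayleyDickson

namespace Quaternion

section Vectors

variable {ι : Type*} [Fintype ι]

lemma star_dotProduct_self (w : ι → ℍ) : star w ⬝ᵥ w = ((∑ i, normSq (w i) : ℝ) : ℍ) := by
  simp [dotProduct, star_mul_self, ← algebraMap_def]

lemma sum_normSq_eq_zero_iff {w : ι → ℍ} : ∑ i, normSq (w i) = 0 ↔ w = 0 := by
  simp [Finset.sum_eq_zero_iff_of_nonneg fun i _ => normSq_nonneg, funext_iff]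

lemma star_dotProduct_self_eq_zero {w : ι → ℍ} : star w ⬝ᵥ w = 0 ↔ w = 0 := by
  rw [star_dotProduct_self, ← coe_zero, coe_inj, sum_normSq_eq_zero_iff]

lemma exists_star_dotProduct_smul_self_eq_one {w : ι → ℍ} (hw : w ≠ 0) :
    ∃ c : ℝ, star (c • w) ⬝ᵥ (c • w) = 1 := by
  have hpos : 0 < ∑ i, normSq (w i) :=
    (Finset.sum_nonneg fun i _ => normSq_nonneg).lt_of_ne' (sum_normSq_eq_zero_iff.not.2 hw)
  refine ⟨(√(∑ i, normSq (w i)))⁻¹, ?_⟩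
  rw [StarModule.star_smul, star_trivial, smul_dotProduct, dotProduct_smul, smul_smul,
    star_dotProduct_self,
    smul_coe, ← sq, inv_pow, Real.sq_sqrt hpos.le, inv_mul_cancel₀ hpos.ne', coe_one]

end Vectors

variable {N N₁ N₂ : ℕ}

lemma exists_eigenvector_of_isHermitian_of_ne_zero {B : Matrix (Fin N) (Fin N) ℍ}
    (hB : B.IsHermitian) (h0 : B ≠ 0) : ∃ t : ℝ, t ≠ 0 ∧ ∃ w ≠ 0, B *ᵥ w = t • w := by
  have hf : (qf B).IsHermitian := by rw [IsHermitian, ← qf_conjTranspose, hB]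
  obtain ⟨z, t, ht, hz, hzt⟩ :=
    hf.exists_eigenvector_of_ne_zero (qf_zero (N₁ := N) (N₂ := N) ▸ qf_injective.ne h0)
  obtain ⟨w, rfl⟩ := qcol_surjective z
  refine ⟨t, ht, w, ?_, qcol_injective ?_⟩
  · rintro rfl
    exact hz qcol_zero
  · rw [← qf_mulVec_qcol, hzt, qcol_smul]

lemma conjTranspose_mul_self_ne_zero {Q : Matrix (Fin N₁) (Fin N₂) ℍ} (hQ : Q ≠ 0) :
    Qᴴ * Q ≠ 0 := by
  refine fun h => hQ (Matrix.ext fun i j => ?_)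
  have hcol : star (fun k => Q k j) ⬝ᵥ (fun k => Q k j) = 0 := congrFun₂ h j j
  exact congrFun (star_dotProduct_self_eq_zero.1 hcol) i

lemma exists_singular_pair {Q : Matrix (Fin N₁) (Fin N₂) ℍ} (hQ : Q ≠ 0) :
    ∃ σ : ℝ, 0 < σ ∧ ∃ (u : Fin N₁ → ℍ) (v : Fin N₂ → ℍ), star u ⬝ᵥ u = 1 ∧
      star v ⬝ᵥ v = 1 ∧ Q *ᵥ v = σ • u ∧ Qᴴ *ᵥ u = σ • v := by
  obtain ⟨t, ht, w, hw, hQQw⟩ := exists_eigenvector_of_isHermitian_of_ne_zero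
    (isHermitian_conjTranspose_mul_self Q) (conjTranspose_mul_self_ne_zero hQ)
  obtain ⟨c, hv⟩ := exists_star_dotProduct_smul_self_eq_one hw
  set v := c • w
  have hQQv : Qᴴ *ᵥ (Q *ᵥ v) = t • v := by
    rw [mulVec_mulVec, mulVec_smul, hQQw, smul_comm]
  have hQv : star (Q *ᵥ v) ⬝ᵥ (Q *ᵥ v) = (t : ℍ) := by
    rw [star_mulVec, ← dotProduct_mulVec, hQQv, dotProduct_smul, hv, ← coe_one, smul_coe, mul_one]
  have htpos : 0 < t := by
    rw [star_dotProduct_self, coe_inj] at hQv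
    exact (hQv ▸ Finset.sum_nonneg fun i _ => normSq_nonneg).lt_of_ne' ht
  have hσ : √t * √t = t := Real.mul_self_sqrt htpos.le
  have hσ0 : √t ≠ 0 := (Real.sqrt_pos.2 htpos).ne'
  refine ⟨√t, Real.sqrt_pos.2 htpos, (√t)⁻¹ • (Q *ᵥ v), v, ?_, hv, ?_, ?_⟩
  · rw [StarModule.star_smul, star_trivial, smul_dotProduct, dotProduct_smul, hQv, smul_smul,
      smul_coe, ← mul_inv, hσ, inv_mul_cancel₀ ht, coe_one]
  · rw [smul_smul, mul_inv_cancel₀ hσ0, one_smul]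
  · rw [mulVec_smul, hQQv, smul_smul, (inv_mul_eq_iff_eq_mul₀ hσ0).2 hσ.symm]

lemma exists_mem_unitary_star_mul_eq_norm (q : ℍ) : ∃ ω ∈ unitary ℍ, star ω * q = (‖q‖ : ℍ) := by
  rcases eq_or_ne q 0 with rfl | hq
  · exact ⟨1, one_mem _, by simp⟩
  have hq' : ‖q‖ ≠ 0 := norm_ne_zero_iff.2 hq
  have hωq : star (‖q‖⁻¹ • q) * q = (‖q‖ : ℍ) := by
    rw [star_smul, smul_mul_assoc, star_mul_self, normSq_eq_norm_mul_self, smul_coe,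
      inv_mul_cancel_left₀ hq']
  have hωω : star (‖q‖⁻¹ • q) * (‖q‖⁻¹ • q) = 1 := by
    rw [mul_smul_comm, hωq, smul_coe, inv_mul_cancel₀ hq', coe_one]
  exact ⟨‖q‖⁻¹ • q, ⟨hωω, star_comm_self' (‖q‖⁻¹ • q) ▸ hωω⟩, hωq⟩

variable {n : Type*} [Fintype n] [DecidableEq n]

lemma exists_mem_unitary_mulVec_eq {x y : n → ℍ} (hxx : star x ⬝ᵥ x = star y ⬝ᵥ y)
    (hxy : star x ⬝ᵥ y = star y ⬝ᵥ x) : ∃ H ∈ unitary (Matrix n n ℍ), H *ᵥ x = y := by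
  set u := x - y
  set s := ∑ i, normSq (u i)
  -- the reflection in `u`; when `x = y` the junk value `2 / 0 = 0` makes it the identity
  set H : Matrix n n ℍ := 1 - (2 / s) • vecMulVec u (star u)
  have hu : star u ⬝ᵥ u = (s : ℍ) := star_dotProduct_self u
  have hux : star u ⬝ᵥ x = ((s / 2 : ℝ) : ℍ) := by
    have h2 : (2 : ℝ) • (star u ⬝ᵥ x) = (s : ℍ) := by
      rw [← hu, two_smul]
      simp only [u, star_sub, sub_dotProduct, dotProduct_sub]
      rw [hxx, hxy]
      abel
    rw [← inv_smul_smul₀ (two_ne_zero' ℝ) (star u ⬝ᵥ x), h2, smul_coe, inv_mul_eq_div]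
  have hHH : H * H = 1 := by
    have hs : (2 / s) * (2 / s) * s = 2 * (2 / s) := by
      rcases eq_or_ne s 0 with h | h
      · simp [h]
      · field_simp
    have hsu : (s : ℍ) • star u = s • star u := funext fun i => coe_mul_eq_smul s _
    simp only [H, sub_mul, mul_sub, one_mul, mul_one, smul_mul_smul_comm, vecMulVec_mul_vecMulVec,
      hu, hsu, vecMulVec_smul, smul_smul, hs, two_mul, add_smul]
    abel
  have hHx : H *ᵥ x = y := by
    have hcu : (2 / s * (s / 2)) • u = u := by
      rcases eq_or_ne s 0 with h | h
      · rw [sum_normSq_eq_zero_iff.1 h, smul_zero]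
      · rw [show 2 / s * (s / 2) = 1 by field_simp, one_smul]
    have hop : MulOpposite.op ((s / 2 : ℝ) : ℍ) • u = (s / 2) • u :=
      funext fun i => mul_coe_eq_smul _ _
    simp only [H, sub_mulVec, one_mulVec, smul_mulVec, vecMulVec_mulVec, hux, hop,
      smul_smul, hcu, u, sub_sub_cancel]
  have hH : star H = H := by
    simp only [H, star_eq_conjTranspose, conjTranspose_sub, conjTranspose_one,
      conjTranspose_smul, conjTranspose_vecMulVec, star_star, star_trivial]
  exact ⟨H, by rw [Unitary.mem_iff, hH]; exact ⟨hHH, hHH⟩, hHx⟩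

lemma exists_mem_unitary_mulVec_single_eq (a : n) {v : n → ℍ} (hv : star v ⬝ᵥ v = 1) :
    ∃ U ∈ unitary (Matrix n n ℍ), U *ᵥ Pi.single a 1 = v := by
  -- the phase `ω` makes `⟪e_a ω, v⟫` real, so that a reflection maps `e_a ω` to `v`
  obtain ⟨ω, hω, hωv⟩ := exists_mem_unitary_star_mul_eq_norm (v a)
  obtain ⟨H, hH, hHv⟩ : ∃ H ∈ unitary (Matrix n n ℍ), H *ᵥ Pi.single a ω = v := by
    refine exists_mem_unitary_mulVec_eq ?_ ?_
    · rw [← Pi.single_star, single_dotProduct, Pi.single_eq_same, hv]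
      exact (Unitary.mem_iff.1 hω).1
    · rw [← Pi.single_star, single_dotProduct, dotProduct_single, hωv, ← star_coe, ← hωv,
        star_mul, star_star, Pi.star_apply]
  have hD : ∀ i, Function.update (1 : n → ℍ) a ω i ∈ unitary ℍ := fun i => by
    rcases eq_or_ne i a with rfl | hi
    · rwa [Function.update_self]
    · rw [Function.update_of_ne hi]
      exact one_mem _
  refine ⟨H * diagonal (Function.update 1 a ω), mul_mem hH (diagonal_mem_unitary hD), ?_⟩
  rw [← mulVec_mulVec, diagonal_mulVec_single, Function.update_self, mul_one, hHv]

end Quaternion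

lemma conjTranspose_mul_mul_mulVec_single {m n : Type*} [Fintype m] [DecidableEq m] [Fintype n]
    [DecidableEq n] {U : Matrix m m ℍ} {Q : Matrix m n ℍ} {V : Matrix n n ℍ} {u : m → ℍ}
    {v : n → ℍ} {σ : ℝ} {a : m} {b : n} (hU : U ∈ unitary (Matrix m m ℍ))
    (hu : U *ᵥ Pi.single a 1 = u) (hv : V *ᵥ Pi.single b 1 = v) (hQv : Q *ᵥ v = σ • u) :
    (Uᴴ * Q * V) *ᵥ Pi.single b 1 = σ • Pi.single a 1 := by
  rw [← mulVec_mulVec, hv, ← mulVec_mulVec, hQv, mulVec_smul, ← hu, mulVec_mulVec,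
    ← star_eq_conjTranspose, Unitary.star_mul_self_of_mem hU, one_mulVec]

lemma eq_border_of_mulVec_single {m n : ℕ} {P : Matrix (Fin (m + 1)) (Fin (n + 1)) ℍ} {σ : ℝ}
    (hcol : P *ᵥ Pi.single 0 1 = σ • Pi.single 0 1)
    (hrow : Pᴴ *ᵥ Pi.single 0 1 = σ • Pi.single 0 1) :
    P = border (σ : ℍ) (P.submatrix Fin.succ Fin.succ) := by
  refine Matrix.ext fun i j => ?_
  refine Fin.cases ?_ (fun i => ?_) i <;> refine Fin.cases ?_ (fun j => ?_) j
  · simpa [← Quaternion.coe_mul_eq_smul] using congrFun hcol 0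
  · simpa using congrFun hrow j.succ
  · simpa using congrFun hcol i.succ
  · rfl

section QSVD

variable {N N₁ N₂ : ℕ}

lemma qUnitary_iff_mem_unitary {U : Matrix (Fin N) (Fin N) ℍ} :
    qUnitary U ↔ U ∈ unitary (Matrix (Fin N) (Fin N) ℍ) := by
  rw [Unitary.mem_iff, star_eq_conjTranspose, and_comm]
  rfl

lemma recDiagNonneg_border {Λ : Matrix (Fin N₁) (Fin N₂) ℝ} (hΛ : recDiagNonneg Λ) {σ : ℝ}
    (hσ : 0 ≤ σ) : recDiagNonneg (border σ Λ) := by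
  refine ⟨fun i j hij => ?_, fun i j => ?_⟩
  · induction i using Fin.cases <;> induction j using Fin.cases
    · exact absurd rfl hij
    all_goals simp only [border_zero_succ, border_succ_zero, border_succ_succ]
    exact hΛ.1 _ _ (by simpa using hij)
  · induction i using Fin.cases <;> induction j using Fin.cases
    · exact hσ
    all_goals simp only [border_zero_succ, border_succ_zero, border_succ_succ, le_refl, hΛ.2]

lemma isQSVD_zero : IsQSVD (0 : Matrix (Fin N₁) (Fin N₂) ℍ) 1 0 1 :=
  ⟨qUnitary_iff_mem_unitary.2 (one_mem _), qUnitary_iff_mem_unitary.2 (one_mem _),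
    ⟨fun _ _ _ => rfl, fun _ _ => le_rfl⟩,
    by rw [rToQ, Matrix.map_zero _ (map_zero _), Matrix.mul_zero, Matrix.zero_mul]⟩

variable {Q : Matrix (Fin N₁) (Fin N₂) ℍ} {U : Matrix (Fin N₁) (Fin N₁) ℍ}
  {Λ : Matrix (Fin N₁) (Fin N₂) ℝ} {V : Matrix (Fin N₂) (Fin N₂) ℍ}

lemma IsQSVD.border (h : IsQSVD Q U Λ V) {σ : ℝ} (hσ : 0 ≤ σ) :
    IsQSVD (Matrix.border (σ : ℍ) Q) (Matrix.border 1 U) (Matrix.border σ Λ)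
      (Matrix.border 1 V) := by
  obtain ⟨hU, hV, hΛ, rfl⟩ := h
  refine ⟨qUnitary_iff_mem_unitary.2 (border_one_mem_unitary (qUnitary_iff_mem_unitary.1 hU)),
    qUnitary_iff_mem_unitary.2 (border_one_mem_unitary (qUnitary_iff_mem_unitary.1 hV)),
    recDiagNonneg_border hΛ hσ, ?_⟩
  unfold rToQ
  rw [map_border _ _ (map_zero _), conjTranspose_border, border_mul_border, border_mul_border,
    star_one, one_mul, mul_one, Quaternion.algebraMap_def]

lemma IsQSVD.unitary_mul_mul (h : IsQSVD Q U Λ V) {U₁ : Matrix (Fin N₁) (Fin N₁) ℍ}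
    {V₁ : Matrix (Fin N₂) (Fin N₂) ℍ} (hU₁ : U₁ ∈ unitary (Matrix (Fin N₁) (Fin N₁) ℍ))
    (hV₁ : V₁ ∈ unitary (Matrix (Fin N₂) (Fin N₂) ℍ)) :
    IsQSVD (U₁ * Q * V₁ᴴ) (U₁ * U) Λ (V₁ * V) := by
  obtain ⟨hU, hV, hΛ, rfl⟩ := h
  refine ⟨qUnitary_iff_mem_unitary.2 (mul_mem hU₁ (qUnitary_iff_mem_unitary.1 hU)),
    qUnitary_iff_mem_unitary.2 (mul_mem hV₁ (qUnitary_iff_mem_unitary.1 hV)), hΛ, ?_⟩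
  simp only [conjTranspose_mul, Matrix.mul_assoc]

lemma exists_eq_mul_border_mul_conjTranspose {m n : ℕ} {Q : Matrix (Fin (m + 1)) (Fin (n + 1)) ℍ}
    (hQ : Q ≠ 0) : ∃ σ : ℝ, 0 < σ ∧ ∃ U₁ ∈ unitary (Matrix (Fin (m + 1)) (Fin (m + 1)) ℍ),
      ∃ V₁ ∈ unitary (Matrix (Fin (n + 1)) (Fin (n + 1)) ℍ), ∃ Q' : Matrix (Fin m) (Fin n) ℍ,
        Q = U₁ * border (σ : ℍ) Q' * V₁ᴴ := by
  obtain ⟨σ, hσ, u, v, hu, hv, hQv, hQu⟩ := Quaternion.exists_singular_pair hQ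
  obtain ⟨U₁, hU₁, hU₁u⟩ := Quaternion.exists_mem_unitary_mulVec_single_eq 0 hu
  obtain ⟨V₁, hV₁, hV₁v⟩ := Quaternion.exists_mem_unitary_mulVec_single_eq 0 hv
  set Q' := (U₁ᴴ * Q * V₁).submatrix Fin.succ Fin.succ
  have hP : U₁ᴴ * Q * V₁ = border (σ : ℍ) Q' := by
    refine eq_border_of_mulVec_single (conjTranspose_mul_mul_mulVec_single hU₁ hU₁u hV₁v hQv) ?_
    rw [conjTranspose_mul, conjTranspose_mul, conjTranspose_conjTranspose, ← Matrix.mul_assoc]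
    exact conjTranspose_mul_mul_mulVec_single hV₁ hV₁v hU₁u hQu
  refine ⟨σ, hσ, U₁, hU₁, V₁, hV₁, Q', ?_⟩
  rw [← hP]
  simp only [← Matrix.mul_assoc, ← star_eq_conjTranspose, Unitary.mul_star_self_of_mem hU₁,
    Matrix.one_mul]
  rw [Matrix.mul_assoc, Unitary.mul_star_self_of_mem hV₁, Matrix.mul_one]

end QSVD

/-- Every quaternion matrix admits a QSVD. -/
theorem qsvd_exists {N₁ N₂ : ℕ} (Q : Matrix (Fin N₁) (Fin N₂) (Quaternion ℝ)) :
    ∃ (U : Matrix (Fin N₁) (Fin N₁) (Quaternion ℝ))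
      (Λ : Matrix (Fin N₁) (Fin N₂) ℝ)
      (V : Matrix (Fin N₂) (Fin N₂) (Quaternion ℝ)),
      IsQSVD Q U Λ V := by
  induction N₁ generalizing N₂ with
  | zero => exact ⟨1, 0, 1, Subsingleton.elim 0 Q ▸ isQSVD_zero⟩
  | succ n ih =>
    rcases eq_or_ne Q 0 with rfl | hQ
    · exact ⟨1, 0, 1, isQSVD_zero⟩
    obtain _ | m := N₂
    · exact absurd (Subsingleton.elim Q 0) hQ
    obtain ⟨σ, hσ, U₁, hU₁, V₁, hV₁, Q', rfl⟩ := exists_eq_mul_border_mul_conjTranspose hQ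
    obtain ⟨U, Λ, V, h⟩ := ih Q'
    exact ⟨_, _, _, (h.border hσ.le).unitary_mul_mul hU₁ hV₁⟩
end
end

section
/- (Quaternion singular value thresholding.) Let Q ∈ ℍ^{N₁×N₂} have a QSVD Q = U Λ Vᴴ with singular values σ₁, …, σ_{min(N₁,N₂)} on the diagonal of Λ, and let ξ > 0. Define S_ξ(Q) = U Λ̆ Vᴴ, where Λ̆ is the rectangular diagonal matrix with diagonal entries max(σ_k − ξ, 0). Then S_ξ(Q) is the unique minimizer over X ∈ ℍ^{N₁×N₂} of the function N(X) = ξ‖X‖_* + ½‖X − Q‖_F²; that is, for every X, N(X) ≥ N(S_ξ(Q)), with equality only when X = S_ξ(Q). -/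
/-!
Let `S = S_ξ(Q)` and `W = Q - S = U Λ̃ Vᴴ`, where `Λ̃` has the diagonal entries `min(σ_k, ξ)`.
Pass to the complex representation `f`: it is multiplicative, compatible with `ᴴ`, and doubles
both the nuclear norm and the squared Frobenius norm. Then `f(W)ᴴ f(W) ≤ ξ²`, i.e. `‖f(W)‖₂ ≤ ξ`,
and `Re tr(f(W)ᴴ f(S)) = ξ ‖f(S)‖_*`, while duality of the spectral and nuclear norms gives
`Re tr(f(W)ᴴ f(X)) ≤ ξ ‖f(X)‖_*` for every `X`. So `W` is `ξ` times a subgradient of the nuclear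
norm at `S`, and expanding `‖X - Q‖_F² = ‖(X - S) - W‖_F²` yields `N(X) ≥ N(S) + ½ ‖X - S‖_F²`.
-/

open Matrix

noncomputable section

open scoped ComplexOrder Quaternion

namespace QSVT

section ComplexMatrix

variable {m n : Type*} [Fintype m] [Fintype n]

def nuclearNorm [DecidableEq n] (A : Matrix m n ℂ) : ℝ :=
  ∑ j, √((isHermitian_conjTranspose_mul_self A).eigenvalues j)

lemma re_trace_conjTranspose_mul_comm (A B : Matrix m n ℂ) :
    (trace (Aᴴ * B)).re = (trace (Bᴴ * A)).re := by
  rw [← Complex.conj_re, ← Complex.star_def, ← trace_conjTranspose, conjTranspose_mul,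
    conjTranspose_conjTranspose]

lemma re_trace_conjTranspose_sub_mul_sub (A B : Matrix m n ℂ) :
    (trace ((A - B)ᴴ * (A - B))).re =
      (trace (Aᴴ * A)).re - 2 * (trace (Bᴴ * A)).re + (trace (Bᴴ * B)).re := by
  simp only [conjTranspose_sub, Matrix.sub_mul, Matrix.mul_sub, trace_sub, Complex.sub_re,
    re_trace_conjTranspose_mul_comm A B]
  ring

lemma re_trace_conjTranspose_mul_self (A : Matrix m n ℂ) :
    (trace (Aᴴ * A)).re = ∑ i, ∑ j, ‖A i j‖ ^ 2 := by
  simp only [trace, diag_apply, mul_apply, conjTranspose_apply, Complex.re_sum]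
  rw [Finset.sum_comm]
  refine Finset.sum_congr rfl fun i _ => Finset.sum_congr rfl fun j _ => ?_
  rw [Complex.star_def, ← Complex.normSq_eq_conj_mul_self, Complex.ofReal_re, Complex.sq_norm]

lemma re_star_dotProduct_le (x y : n → ℂ) :
    (star x ⬝ᵥ y).re ≤ √(star x ⬝ᵥ x).re * √(star y ⬝ᵥ y).re := by
  simpa only [EuclideanSpace.inner_eq_star_dotProduct, norm_eq_sqrt_re_inner (𝕜 := ℂ),
    dotProduct_comm _ (star _), RCLike.re_to_complex] using
    re_inner_le_norm (𝕜 := ℂ) (WithLp.toLp 2 x) (WithLp.toLp 2 y)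

lemma star_dotProduct_conjTranspose_mul_mulVec (W A : Matrix m n ℂ) (v : n → ℂ) :
    star v ⬝ᵥ ((Wᴴ * A) *ᵥ v) = star (W *ᵥ v) ⬝ᵥ (A *ᵥ v) := by
  rw [← mulVec_mulVec, dotProduct_mulVec, ← star_mulVec]

variable [DecidableEq n]

lemma trace_eq_sum_star_dotProduct (M : Matrix n n ℂ)
    (b : OrthonormalBasis n ℂ (EuclideanSpace ℂ n)) :
    trace M = ∑ j, star ⇑(b j) ⬝ᵥ (M *ᵥ ⇑(b j)) := by
  have : trace M = LinearMap.trace ℂ _ (toLpLin 2 2 M) := by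
    rw [toLpLin_eq_toLin, LinearMap.trace_eq_matrix_trace ℂ (PiLp.basisFun 2 ℂ n),
      LinearMap.toMatrix_toLin]
  rw [this, LinearMap.trace_eq_sum_inner _ b]
  simp only [EuclideanSpace.inner_eq_star_dotProduct, toLpLin_apply, dotProduct_comm]

/-- Duality of the spectral and nuclear norms; `Wᴴ W ≤ ξ² • 1` says `‖W‖₂ ≤ ξ`. -/
lemma re_trace_conjTranspose_mul_le_nuclearNorm {ξ : ℝ} (hξ : 0 ≤ ξ) {W : Matrix m n ℂ}
    (hW : (ξ ^ 2 • 1 - Wᴴ * W).PosSemidef) (A : Matrix m n ℂ) :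
    (trace (Wᴴ * A)).re ≤ ξ * nuclearNorm A := by
  set hH := isHermitian_conjTranspose_mul_self A
  set c : n → n → ℂ := fun j => ⇑(hH.eigenvectorBasis j)
  have hc : ∀ j, star (c j) ⬝ᵥ c j = 1 := fun j => by
    have h := inner_self_eq_norm_sq_to_K (𝕜 := ℂ) (hH.eigenvectorBasis j)
    rw [hH.eigenvectorBasis.orthonormal.1 j, EuclideanSpace.inner_eq_star_dotProduct,
      dotProduct_comm] at h
    simpa using h
  have hAc : ∀ j, (star (A *ᵥ c j) ⬝ᵥ (A *ᵥ c j)).re = hH.eigenvalues j := fun j => by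
    rw [hH.eigenvalues_eq, star_dotProduct_conjTranspose_mul_mulVec, RCLike.re_to_complex]
  have hWc : ∀ j, (star (W *ᵥ c j) ⬝ᵥ (W *ᵥ c j)).re ≤ ξ ^ 2 := fun j => by
    have h := Complex.nonneg_iff.mp (hW.dotProduct_mulVec_nonneg (c j))
    simp only [sub_mulVec, dotProduct_sub, smul_mulVec, one_mulVec, dotProduct_smul, hc j,
      star_dotProduct_conjTranspose_mul_mulVec, Complex.sub_re, Complex.real_smul] at h
    simpa [← Complex.ofReal_pow] using h.1
  rw [trace_eq_sum_star_dotProduct _ hH.eigenvectorBasis, Complex.re_sum, nuclearNorm,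
    Finset.mul_sum]
  refine Finset.sum_le_sum fun j _ => ?_
  rw [star_dotProduct_conjTranspose_mul_mulVec]
  calc (star (W *ᵥ c j) ⬝ᵥ (A *ᵥ c j)).re
      ≤ √(star (W *ᵥ c j) ⬝ᵥ (W *ᵥ c j)).re * √(star (A *ᵥ c j) ⬝ᵥ (A *ᵥ c j)).re :=
        re_star_dotProduct_le _ _
    _ ≤ ξ * √(hH.eigenvalues j) := by
        rw [hAc j]
        gcongr
        exact Real.sqrt_le_iff.mpr ⟨hξ, hWc j⟩

/-- The hypotheses say that `C - T` is `ξ` times a subgradient of the nuclear norm at `T`. -/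
lemma nuclearNorm_add_half_sq_le {ξ : ℝ} (hξ : 0 ≤ ξ) {C T : Matrix m n ℂ}
    (hW : (ξ ^ 2 • 1 - (C - T)ᴴ * (C - T)).PosSemidef)
    (hT : (trace ((C - T)ᴴ * T)).re = ξ * nuclearNorm T) (Y : Matrix m n ℂ) :
    ξ * nuclearNorm T + (trace ((T - C)ᴴ * (T - C))).re / 2 +
        (trace ((Y - T)ᴴ * (Y - T))).re / 2 ≤
      ξ * nuclearNorm Y + (trace ((Y - C)ᴴ * (Y - C))).re / 2 := by
  have hY := re_trace_conjTranspose_mul_le_nuclearNorm hξ hW Y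
  have hTC : (T - C)ᴴ * (T - C) = (C - T)ᴴ * (C - T) := by
    rw [← neg_sub C T, conjTranspose_neg, Matrix.neg_mul, Matrix.mul_neg, neg_neg]
  have hYC : (trace ((Y - C)ᴴ * (Y - C))).re = (trace ((Y - T)ᴴ * (Y - T))).re
      - 2 * ((trace ((C - T)ᴴ * Y)).re - (trace ((C - T)ᴴ * T)).re)
      + (trace ((C - T)ᴴ * (C - T))).re := by
    rw [show Y - C = (Y - T) - (C - T) by abel, re_trace_conjTranspose_sub_mul_sub,
      Matrix.mul_sub (C - T)ᴴ Y T, trace_sub, Complex.sub_re]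
  rw [hTC, hYC]
  linarith

lemma eigenvalues_eq_of_eq_unitary_conj {M : Matrix n n ℂ} (hM : M.IsHermitian)
    {P : Matrix n n ℂ} (hP : Pᴴ * P = 1) {d : n → ℝ}
    (hd : M = P * diagonal (fun j => (d j : ℂ)) * Pᴴ) :
    Finset.univ.val.map hM.eigenvalues = Finset.univ.val.map d := by
  have hchar : M.charpoly = ∏ j, (Polynomial.X - Polynomial.C (d j : ℂ)) := by
    rw [hd, charpoly_mul_comm, ← Matrix.mul_assoc, hP, Matrix.one_mul, charpoly_diagonal]
  have hroots := hM.roots_charpoly_eq_eigenvalues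
  rw [hchar, Polynomial.roots_prod _ _
    (by simp [Finset.prod_ne_zero_iff, Polynomial.X_sub_C_ne_zero])] at hroots
  apply Multiset.map_injective Complex.ofReal_injective
  simpa [Multiset.map_map, Function.comp_def] using hroots.symm

lemma nuclearNorm_eq_of_eq_unitary_conj {A : Matrix m n ℂ} {P : Matrix n n ℂ}
    (hP : Pᴴ * P = 1) {d : n → ℝ} (hd : Aᴴ * A = P * diagonal (fun j => (d j : ℂ)) * Pᴴ) :
    nuclearNorm A = ∑ j, √(d j) := by
  simp only [nuclearNorm, ← Finset.sum_map_val, ← Function.comp_apply (f := Real.sqrt),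
    ← Multiset.map_map, eigenvalues_eq_of_eq_unitary_conj _ hP hd]

lemma re_trace_unitary_conj_diagonal {P : Matrix n n ℂ} (hP : Pᴴ * P = 1) (d : n → ℝ) :
    (trace (P * diagonal (fun j => (d j : ℂ)) * Pᴴ)).re = ∑ j, d j := by
  rw [trace_mul_comm, ← Matrix.mul_assoc, hP, Matrix.one_mul, trace_diagonal, Complex.re_sum]
  rfl

lemma posSemidef_smul_one_sub_unitary_conj {P : Matrix n n ℂ} (hP : P * Pᴴ = 1) {d : n → ℝ}
    {c : ℝ} (hd : ∀ j, d j ≤ c) :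
    (c • 1 - P * diagonal (fun j => (d j : ℂ)) * Pᴴ).PosSemidef := by
  have : c • 1 - P * diagonal (fun j => (d j : ℂ)) * Pᴴ
      = P * diagonal (fun j => ((c - d j : ℝ) : ℂ)) * Pᴴ := by
    simp only [Complex.ofReal_sub, ← diagonal_sub, Matrix.mul_sub, Matrix.sub_mul,
      ← smul_one_eq_diagonal, Matrix.mul_smul, Matrix.smul_mul, Matrix.mul_one, hP,
      Complex.coe_smul]
  rw [this]
  refine PosSemidef.mul_mul_conjTranspose_same (posSemidef_diagonal_iff.mpr fun j => ?_) P
  exact_mod_cast sub_nonneg.mpr (hd j)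

end ComplexMatrix

lemma sum_comp_of_support_subsingleton {ι β γ : Type*} [Fintype ι] [AddCommMonoid β]
    [AddCommMonoid γ] {g : ι → β} (hg : (Function.support g).Subsingleton) {F : β → γ}
    (hF : F 0 = 0) : ∑ i, F (g i) = F (∑ i, g i) := by
  rcases hg.eq_empty_or_singleton with h | ⟨a, ha⟩
  · simp [Function.support_eq_empty_iff.mp h, hF]
  · have hzero : ∀ i, i ≠ a → g i = 0 := fun i hi =>
      Function.notMem_support.mp fun h' => hi (by simpa [ha] using h')
    rw [Finset.sum_eq_single a (fun i _ hi => by rw [hzero i hi, hF]) (by simp),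
      Finset.sum_eq_single a (fun i _ hi => hzero i hi) (by simp)]

variable {N₁ N₂ N₃ : ℕ}

lemma transpose_map_mul_map_of_offDiag {Λ : Matrix (Fin N₁) (Fin N₂) ℝ}
    (hΛ : ∀ (m : Fin N₁) (n : Fin N₂), (m : ℕ) ≠ (n : ℕ) → Λ m n = 0) {F G : ℝ → ℝ}
    (hF : F 0 = 0) (hG : G 0 = 0) :
    (Λ.map F)ᵀ * Λ.map G = diagonal fun k => F (∑ m, Λ m k) * G (∑ m, Λ m k) := by
  ext k l
  rw [mul_apply, diagonal_apply]
  split_ifs with hkl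
  · subst hkl
    refine sum_comp_of_support_subsingleton (F := fun x => F x * G x) ?_ (by simp [hF])
    intro i hi j hj
    exact Fin.ext ((not_not.mp fun h => hi (hΛ i k h)).trans
      (not_not.mp fun h => hj (hΛ j k h)).symm)
  · refine Finset.sum_eq_zero fun m _ => ?_
    rcases eq_or_ne (m : ℕ) k with hmk | hmk
    · simp [hΛ m l (fun h => hkl (Fin.ext (hmk ▸ h))), hG]
    · simp [hΛ m k hmk, hF]

lemma threshold_eq_map {Λ : Matrix (Fin N₁) (Fin N₂) ℝ}
    (hΛ : ∀ (m : Fin N₁) (n : Fin N₂), (m : ℕ) ≠ (n : ℕ) → Λ m n = 0) {ξ : ℝ} (hξ : 0 ≤ ξ) :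
    (of fun (m : Fin N₁) (n : Fin N₂) => if (m : ℕ) = (n : ℕ) then max (Λ m n - ξ) 0 else 0) =
      Λ.map fun s => max (s - ξ) 0 := by
  ext m n
  by_cases h : (m : ℕ) = n <;> simp [h, hΛ m n, hξ]

@[simp] lemma qC1_re (q : ℍ[ℝ]) : (qC1 q).re = q.re := rfl
@[simp] lemma qC1_im (q : ℍ[ℝ]) : (qC1 q).im = q.imI := rfl
@[simp] lemma qC2_re (q : ℍ[ℝ]) : (qC2 q).re = q.imJ := rfl
@[simp] lemma qC2_im (q : ℍ[ℝ]) : (qC2 q).im = q.imK := rfl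

lemma qC1_add (p q : ℍ[ℝ]) : qC1 (p + q) = qC1 p + qC1 q := Complex.ext (by simp) (by simp)

lemma qC2_add (p q : ℍ[ℝ]) : qC2 (p + q) = qC2 p + qC2 q := Complex.ext (by simp) (by simp)

lemma qC1_sum {ι : Type*} (s : Finset ι) (f : ι → ℍ[ℝ]) :
    qC1 (∑ i ∈ s, f i) = ∑ i ∈ s, qC1 (f i) :=
  map_sum (AddMonoidHom.mk' qC1 qC1_add) f s

lemma qC2_sum {ι : Type*} (s : Finset ι) (f : ι → ℍ[ℝ]) :
    qC2 (∑ i ∈ s, f i) = ∑ i ∈ s, qC2 (f i) :=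
  map_sum (AddMonoidHom.mk' qC2 qC2_add) f s

lemma qC1_mul (p q : ℍ[ℝ]) : qC1 (p * q) = qC1 p * qC1 q - qC2 p * star (qC2 q) := by
  apply Complex.ext <;> simp [Quaternion.re_mul, Quaternion.imI_mul] <;> ring

lemma qC2_mul (p q : ℍ[ℝ]) : qC2 (p * q) = qC1 p * qC2 q + qC2 p * star (qC1 q) := by
  apply Complex.ext <;> simp [Quaternion.imJ_mul, Quaternion.imK_mul] <;> ring

lemma norm_qC1_sq_add_norm_qC2_sq (q : ℍ[ℝ]) : ‖qC1 q‖ ^ 2 + ‖qC2 q‖ ^ 2 = ‖q‖ ^ 2 := by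
  rw [Complex.sq_norm, Complex.sq_norm, sq, ← Quaternion.normSq_eq_norm_mul_self,
    Quaternion.normSq_def', Complex.normSq_apply, Complex.normSq_apply]
  simp only [qC1_re, qC1_im, qC2_re, qC2_im]
  ring

lemma qf_sub (X Y : Matrix (Fin N₁) (Fin N₂) ℍ[ℝ]) : qf (X - Y) = qf X - qf Y := by
  ext (m | m) (n | n) <;> apply Complex.ext <;> simp [qf] <;> ring

lemma qf_mul (A : Matrix (Fin N₁) (Fin N₂) ℍ[ℝ]) (B : Matrix (Fin N₂) (Fin N₃) ℍ[ℝ]) :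
    qf (A * B) = qf A * qf B := by
  ext (m | m) (n | n) <;>
    simp [qf, mul_apply, qC1_sum, qC2_sum, qC1_mul, qC2_mul, Finset.sum_sub_distrib,
      Finset.sum_add_distrib, mul_comm] <;> abel

lemma qf_conjTranspose (A : Matrix (Fin N₁) (Fin N₂) ℍ[ℝ]) : qf Aᴴ = (qf A)ᴴ := by
  ext (m | m) (n | n) <;> apply Complex.ext <;> simp [qf]

lemma qf_one : qf (1 : Matrix (Fin N₁) (Fin N₁) ℍ[ℝ]) = 1 := by
  ext (m | m) (n | n) <;> by_cases h : m = n <;>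
    simp [qf, one_apply, h, Complex.ext_iff]

lemma qf_unitary {V : Matrix (Fin N₁) (Fin N₁) ℍ[ℝ]} (hV : qUnitary V) :
    qf V * (qf V)ᴴ = 1 ∧ (qf V)ᴴ * qf V = 1 := by
  simp only [← qf_conjTranspose, ← qf_mul, hV.1, hV.2, qf_one, and_self]

lemma qNuclearNorm_eq (X : Matrix (Fin N₁) (Fin N₂) ℍ[ℝ]) :
    qNuclearNorm X = nuclearNorm (qf X) / 2 := by
  rw [qNuclearNorm, nuclearNorm, one_div_mul_eq_div]

lemma re_trace_conjTranspose_qf_mul_qf (X : Matrix (Fin N₁) (Fin N₂) ℍ[ℝ]) :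
    (trace ((qf X)ᴴ * qf X)).re = 2 * qFrob X ^ 2 := by
  rw [qFrob, Real.sq_sqrt (by positivity), re_trace_conjTranspose_mul_self, Finset.mul_sum]
  simp only [Fintype.sum_sum_type, qf, fromBlocks_apply₁₁, fromBlocks_apply₁₂,
    fromBlocks_apply₂₁, fromBlocks_apply₂₂, of_apply, norm_neg, norm_star, Finset.mul_sum,
    ← Finset.sum_add_distrib, ← norm_qC1_sq_add_norm_qC2_sq]
  refine Finset.sum_congr rfl fun m _ => Finset.sum_congr rfl fun n _ => by ring

lemma qFrob_eq_zero_iff {X : Matrix (Fin N₁) (Fin N₂) ℍ[ℝ]} : qFrob X = 0 ↔ X = 0 := by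
  rw [qFrob, Real.sqrt_eq_zero (by positivity),
    Fintype.sum_eq_zero_iff_of_nonneg fun m => by positivity, ← Matrix.ext_iff]
  simp only [funext_iff, Pi.zero_apply,
    Fintype.sum_eq_zero_iff_of_nonneg fun _ => sq_nonneg _, Matrix.zero_apply, sq_eq_zero_iff,
    norm_eq_zero]

lemma rToQ_mul (A : Matrix (Fin N₁) (Fin N₂) ℝ) (B : Matrix (Fin N₂) (Fin N₃) ℝ) :
    rToQ (A * B) = rToQ A * rToQ B :=
  Matrix.map_mul

lemma conjTranspose_rToQ (A : Matrix (Fin N₁) (Fin N₂) ℝ) : (rToQ A)ᴴ = rToQ Aᵀ := by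
  ext m n : 1
  simp [rToQ, Quaternion.algebraMap_def]

lemma qf_rToQ_diagonal (d : Fin N₁ → ℝ) :
    qf (rToQ (diagonal d)) = diagonal fun j => ((Sum.elim d d j : ℝ) : ℂ) := by
  ext (m | m) (n | n) <;> by_cases h : m = n <;>
    simp [qf, rToQ, h, Quaternion.algebraMap_def, Complex.ext_iff]

lemma conjTranspose_mul_eq_rToQ_transpose_mul {U : Matrix (Fin N₁) (Fin N₁) ℍ[ℝ]} (hU : Uᴴ * U = 1)
    (V : Matrix (Fin N₂) (Fin N₂) ℍ[ℝ]) (B C : Matrix (Fin N₁) (Fin N₂) ℝ) :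
    (U * rToQ B * Vᴴ)ᴴ * (U * rToQ C * Vᴴ) = V * rToQ (Bᵀ * C) * Vᴴ := by
  simp only [conjTranspose_mul, conjTranspose_conjTranspose, conjTranspose_rToQ, rToQ_mul,
    Matrix.mul_assoc]
  rw [← Matrix.mul_assoc Uᴴ, hU, Matrix.one_mul]


section SVD

variable {U : Matrix (Fin N₁) (Fin N₁) ℍ[ℝ]} {V : Matrix (Fin N₂) (Fin N₂) ℍ[ℝ]}
  {Λ : Matrix (Fin N₁) (Fin N₂) ℝ}

lemma conjTranspose_qf_mul_qf_of_offDiag (hU : qUnitary U)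
    (hΛ : ∀ (m : Fin N₁) (n : Fin N₂), (m : ℕ) ≠ (n : ℕ) → Λ m n = 0) {F G : ℝ → ℝ}
    (hF : F 0 = 0) (hG : G 0 = 0) :
    (qf (U * rToQ (Λ.map F) * Vᴴ))ᴴ * qf (U * rToQ (Λ.map G) * Vᴴ) =
      qf V * qf (rToQ (diagonal fun k => F (∑ m, Λ m k) * G (∑ m, Λ m k))) * (qf V)ᴴ := by
  rw [← qf_conjTranspose, ← qf_mul, conjTranspose_mul_eq_rToQ_transpose_mul hU.2,
    transpose_map_mul_map_of_offDiag hΛ hF hG, qf_mul, qf_mul, qf_conjTranspose]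

variable {ξ : ℝ}

lemma posSemidef_sq_smul_one_sub_clip (hU : qUnitary U) (hV : qUnitary V)
    (hΛ : recDiagNonneg Λ) (hξ : 0 ≤ ξ) :
    (ξ ^ 2 • 1 - (qf (U * rToQ (Λ.map fun s => min s ξ) * Vᴴ))ᴴ *
      qf (U * rToQ (Λ.map fun s => min s ξ) * Vᴴ)).PosSemidef := by
  rw [conjTranspose_qf_mul_qf_of_offDiag hU hΛ.1 (by simp [hξ]) (by simp [hξ]),
    qf_rToQ_diagonal]
  refine posSemidef_smul_one_sub_unitary_conj (qf_unitary hV).1 fun j => ?_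
  have hσ : ∀ k, 0 ≤ ∑ m, Λ m k := fun k => Finset.sum_nonneg fun m _ => hΛ.2 m k
  rcases j with k | k <;>
    simpa [← sq] using pow_le_pow_left₀ (le_min (hσ k) hξ) (min_le_right _ ξ) 2

lemma re_trace_clip_mul_threshold (hU : qUnitary U) (hV : qUnitary V)
    (hΛ : ∀ (m : Fin N₁) (n : Fin N₂), (m : ℕ) ≠ (n : ℕ) → Λ m n = 0) (hξ : 0 ≤ ξ) :
    (trace ((qf (U * rToQ (Λ.map fun s => min s ξ) * Vᴴ))ᴴ *
      qf (U * rToQ (Λ.map fun s => max (s - ξ) 0) * Vᴴ))).re =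
      ξ * nuclearNorm (qf (U * rToQ (Λ.map fun s => max (s - ξ) 0) * Vᴴ)) := by
  have hthr : max (0 - ξ) (0 : ℝ) = 0 := by simp [hξ]
  have hT := conjTranspose_qf_mul_qf_of_offDiag (V := V) (F := fun s => max (s - ξ) 0)
    (G := fun s => max (s - ξ) 0) hU hΛ hthr hthr
  rw [qf_rToQ_diagonal] at hT
  rw [conjTranspose_qf_mul_qf_of_offDiag (F := fun s => min s ξ) (G := fun s => max (s - ξ) 0)
    hU hΛ (by simp [hξ]) hthr,
    qf_rToQ_diagonal,
    re_trace_unitary_conj_diagonal (qf_unitary hV).2,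
    nuclearNorm_eq_of_eq_unitary_conj (qf_unitary hV).2 hT, Finset.mul_sum]
  have hσ : ∀ σ : ℝ, min σ ξ * max (σ - ξ) 0 = ξ * √(max (σ - ξ) 0 * max (σ - ξ) 0) := by
    intro σ
    rw [Real.sqrt_mul_self (le_max_right _ _)]
    rcases le_total σ ξ with h | h
    · simp [h]
    · rw [min_eq_right h]
  exact Finset.sum_congr rfl fun j _ => by rcases j with k | k <;> exact hσ _

lemma sub_threshold_eq_clip {Q : Matrix (Fin N₁) (Fin N₂) ℍ[ℝ]} (hQ : Q = U * rToQ Λ * Vᴴ) :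
    Q - U * rToQ (Λ.map fun s => max (s - ξ) 0) * Vᴴ =
      U * rToQ (Λ.map fun s => min s ξ) * Vᴴ := by
  have : Λ - Λ.map (fun s => max (s - ξ) 0) = Λ.map fun s => min s ξ := by
    ext m n
    rcases le_total (Λ m n) ξ with h | h <;> simp [h]
  rw [hQ, ← Matrix.sub_mul, ← Matrix.mul_sub, ← this, rToQ, rToQ, rToQ,
    Matrix.map_sub _ (map_sub (algebraMap ℝ ℍ[ℝ]))]

theorem add_half_qFrob_sub_sq_le {Q : Matrix (Fin N₁) (Fin N₂) ℍ[ℝ]} (h : IsQSVD Q U Λ V)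
    (hξ : 0 ≤ ξ) (X : Matrix (Fin N₁) (Fin N₂) ℍ[ℝ]) :
    let S := U * rToQ (Λ.map fun s => max (s - ξ) 0) * Vᴴ
    ξ * qNuclearNorm S + (1 / 2) * qFrob (S - Q) ^ 2 + (1 / 2) * qFrob (X - S) ^ 2 ≤
      ξ * qNuclearNorm X + (1 / 2) * qFrob (X - Q) ^ 2 := by
  intro S
  obtain ⟨hU, hV, hΛ, hQ⟩ := h
  have hW := sub_threshold_eq_clip (ξ := ξ) hQ
  have key := nuclearNorm_add_half_sq_le hξ (C := qf Q) (T := qf S)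
    (by rw [← qf_sub, hW]; exact posSemidef_sq_smul_one_sub_clip hU hV hΛ hξ)
    (by rw [← qf_sub, hW]; exact re_trace_clip_mul_threshold hU hV hΛ.1 hξ) (qf X)
  simp only [← qf_sub, re_trace_conjTranspose_qf_mul_qf] at key
  rw [qNuclearNorm_eq, qNuclearNorm_eq]
  linarith

end SVD

end QSVT

open QSVT in
/-- quaternion singular value thresholding. `S_ξ(Q) = U Λ̆ Vᴴ`, with the singular
values shrunk by `max(σ − ξ, 0)`, is the unique minimizer of
`N(X) = ξ‖X‖_* + ½‖X − Q‖_F²`. -/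
theorem qsvt_minimizer {N₁ N₂ : ℕ} (Q : Matrix (Fin N₁) (Fin N₂) (Quaternion ℝ))
    (U : Matrix (Fin N₁) (Fin N₁) (Quaternion ℝ))
    (Λ : Matrix (Fin N₁) (Fin N₂) ℝ)
    (V : Matrix (Fin N₂) (Fin N₂) (Quaternion ℝ))
    (h : IsQSVD Q U Λ V) (ξ : ℝ) (hξ : 0 < ξ) :
    let S : Matrix (Fin N₁) (Fin N₂) (Quaternion ℝ) :=
      U * rToQ (Matrix.of fun m n =>
        if (m : ℕ) = (n : ℕ) then max (Λ m n - ξ) 0 else 0) * Vᴴ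
    ∀ X : Matrix (Fin N₁) (Fin N₂) (Quaternion ℝ),
      (ξ * qNuclearNorm S + (1 / 2) * qFrob (S - Q) ^ 2 ≤
        ξ * qNuclearNorm X + (1 / 2) * qFrob (X - Q) ^ 2) ∧
      (ξ * qNuclearNorm X + (1 / 2) * qFrob (X - Q) ^ 2 =
        ξ * qNuclearNorm S + (1 / 2) * qFrob (S - Q) ^ 2 → X = S) := by
  intro S X
  obtain ⟨-, -, ⟨hΛ, -⟩, -⟩ := id h
  have hS : S = U * rToQ (Λ.map fun s => max (s - ξ) 0) * Vᴴ := by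
    rw [← threshold_eq_map hΛ hξ.le]
  have key := add_half_qFrob_sub_sq_le h hξ.le X
  rw [← hS] at key
  have hdist := sq_nonneg (qFrob (X - S))
  refine ⟨by linarith, fun heq => ?_⟩
  have hzero : qFrob (X - S) = 0 := pow_eq_zero_iff two_ne_zero |>.mp (by linarith)
  exact sub_eq_zero.mp (qFrob_eq_zero_iff.mp hzero)
end
end
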